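/- Fix α > 0, t > 0 and positive integers m, p. For any constant 0 < c₁ < (1/(2 log 2)) · (t/(2α²mp))², there exist L = ⌈2^{c₁ m p − 1/2}⌉ matrices A₁,…,A_L ∈ {−α, +α}^{m×p} such that for all l ≠ l′, the absolute value of the sum of all entries of the Hadamard product A_l ⊙ A_{l′} is at most t. -/
import Mathlib

open Matrix Finset Real

noncomputable def sgnb (b : Bool) : ℝ := if b then 1 else -1

lemma tail_count {ι : Type*} [Fintype ι] [DecidableEq ι] [Nonempty ι]
    (e : Bool → ℝ) (he : e true = 1 ∧ e false = -1 ∨ e true = -1 ∧ e false = 1)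
    (c : ℝ) (hc : 0 < c) :
    ((univ.filter fun z : ι → Bool => c ≤ ∑ i, e (z i)).card : ℝ)
      ≤ 2 ^ (Fintype.card ι) * Real.exp (-c ^ 2 / (2 * Fintype.card ι)) := by
  set n := Fintype.card ι with hn_def
  have hn : 0 < (n : ℝ) := by
    have := Fintype.card_pos (α := ι); exact_mod_cast this
  set lam := c / n with hlam_def
  have hlam : 0 < lam := div_pos hc hn
  have hsum : ∑ z : ι → Bool, ∏ i, Real.exp (lam * e (z i))
      = (Real.exp lam + Real.exp (-lam)) ^ n := by
    rw [← Fintype.prod_sum (fun (i : ι) (b : Bool) => Real.exp (lam * e b))]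
    have h1 : (∑ b : Bool, Real.exp (lam * e b)) = Real.exp lam + Real.exp (-lam) := by
      rcases he with ⟨h1, h2⟩ | ⟨h1, h2⟩ <;>
        simp [Fintype.sum_bool, h1, h2, mul_neg_one, add_comm]
    rw [Finset.prod_congr rfl fun i _ => h1, Finset.prod_const, Finset.card_univ]
  have markov : ((univ.filter fun z : ι → Bool => c ≤ ∑ i, e (z i)).card : ℝ)
      * Real.exp (lam * c) ≤ (Real.exp lam + Real.exp (-lam)) ^ n := by
    calc ((univ.filter fun z : ι → Bool => c ≤ ∑ i, e (z i)).card : ℝ) * Real.exp (lam * c)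
        = ∑ _z ∈ (univ.filter fun z : ι → Bool => c ≤ ∑ i, e (z i)), Real.exp (lam * c) := by
          rw [sum_const, nsmul_eq_mul]
      _ ≤ ∑ z ∈ (univ.filter fun z : ι → Bool => c ≤ ∑ i, e (z i)),
            Real.exp (lam * ∑ i, e (z i)) := by
          refine sum_le_sum fun z hz => ?_
          have := (mem_filter.1 hz).2
          exact Real.exp_le_exp.2 (mul_le_mul_of_nonneg_left this hlam.le)
      _ ≤ ∑ z : ι → Bool, Real.exp (lam * ∑ i, e (z i)) :=
          sum_le_sum_of_subset_of_nonneg (subset_univ _) fun _ _ _ => (Real.exp_pos _).le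
      _ = ∑ z : ι → Bool, ∏ i, Real.exp (lam * e (z i)) := by
          refine Finset.sum_congr rfl fun z _ => ?_
          rw [mul_sum, Real.exp_sum]
      _ = _ := hsum
  have hcosh : Real.exp lam + Real.exp (-lam) ≤ 2 * Real.exp (lam ^ 2 / 2) := by
    have h := Real.cosh_le_exp_half_sq lam
    rw [Real.cosh_eq] at h; linarith
  have hpow : (Real.exp lam + Real.exp (-lam)) ^ n ≤ 2 ^ n * Real.exp ((n : ℝ) * (lam ^ 2 / 2)) := by
    calc (Real.exp lam + Real.exp (-lam)) ^ n ≤ (2 * Real.exp (lam ^ 2 / 2)) ^ n :=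
          pow_le_pow_left₀ (by positivity) hcosh n
      _ = 2 ^ n * Real.exp ((n : ℝ) * (lam ^ 2 / 2)) := by
          rw [mul_pow, Real.exp_nat_mul]
  have key := markov.trans hpow
  have hEpos : (0 : ℝ) < Real.exp (lam * c) := Real.exp_pos _
  rw [← le_div_iff₀ hEpos] at key
  refine key.trans (le_of_eq ?_)
  rw [mul_div_assoc, ← Real.exp_sub]
  congr 2
  rw [hlam_def]
  field_simp
  ring

lemma two_sided {ι : Type*} [Fintype ι] [DecidableEq ι] [Nonempty ι] (c : ℝ) (hc : 0 < c) :
    ((univ.filter fun z : ι → Bool => c < |∑ i, sgnb (z i)|).card : ℝ)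
      ≤ 2 * (2 ^ (Fintype.card ι) * Real.exp (-c ^ 2 / (2 * Fintype.card ι))) := by
  have hsub : (univ.filter fun z : ι → Bool => c < |∑ i, sgnb (z i)|) ⊆
      (univ.filter fun z : ι → Bool => c ≤ ∑ i, sgnb (z i)) ∪
      (univ.filter fun z : ι → Bool => c ≤ ∑ i, (fun b => -sgnb b) (z i)) := by
    intro z hz
    have h := (mem_filter.1 hz).2
    rw [Finset.mem_union, mem_filter, mem_filter]
    rcases le_or_gt c (∑ i, sgnb (z i)) with h1 | h1
    · exact Or.inl ⟨mem_univ _, h1⟩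
    · refine Or.inr ⟨mem_univ _, ?_⟩
      rw [Finset.sum_neg_distrib]
      
      rcases abs_cases (∑ i, sgnb (z i)) with ⟨he, _⟩ | ⟨he, _⟩ <;> rw [he] at h <;> linarith
  calc ((univ.filter fun z : ι → Bool => c < |∑ i, sgnb (z i)|).card : ℝ)
      ≤ ((univ.filter fun z : ι → Bool => c ≤ ∑ i, sgnb (z i)).card : ℝ)
        + ((univ.filter fun z : ι → Bool => c ≤ ∑ i, (fun b => -sgnb b) (z i)).card : ℝ) := by
        have := (Finset.card_le_card hsub).trans (Finset.card_union_le _ _)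
        exact_mod_cast this
    _ ≤ _ := by
        have h1 := tail_count (ι := ι) sgnb (Or.inl ⟨by simp [sgnb], by simp [sgnb]⟩) c hc
        have h2 := tail_count (ι := ι) (fun b => -sgnb b)
          (Or.inr ⟨by simp [sgnb], by simp [sgnb]⟩) c hc
        linarith

lemma greedy {ι : Type*} [Fintype ι] [DecidableEq ι] (c : ℝ) :
    ∀ L : ℕ, (((L - 1 : ℕ) : ℝ) *
      ((univ.filter fun z : ι → Bool => c < |∑ i, sgnb (z i)|).card : ℝ)
        < 2 ^ (Fintype.card ι)) →
    ∃ f : Fin L → ι → Bool, ∀ l l', l ≠ l' → |∑ i, sgnb (f l i == f l' i)| ≤ c := by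
  have hbad : ∀ x : ι → Bool,
      (univ.filter fun y : ι → Bool => c < |∑ i, sgnb (x i == y i)|).card
        = (univ.filter fun z : ι → Bool => c < |∑ i, sgnb (z i)|).card := by
    intro x
    have hinv : ∀ a b : Bool, (a == (a == b)) = b := by decide
    refine Finset.card_nbij' (fun y i => x i == y i) (fun z i => x i == z i) ?_ ?_ ?_ ?_
    · intro y hy; simpa using (mem_filter.1 hy).2
    · intro z hz
      simp only [mem_filter, mem_univ, true_and]
      have h2 : ∀ i, (x i == (x i == z i)) = z i := fun i => hinv _ _
      simpa [h2] using (mem_filter.1 hz).2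
    · intro y _; funext i; exact hinv _ _
    · intro z _; funext i; exact hinv _ _
  intro L
  induction L with
  | zero => exact fun _ => ⟨Fin.elim0, fun l => l.elim0⟩
  | succ L ih =>
    intro H
    set B := (univ.filter fun z : ι → Bool => c < |∑ i, sgnb (z i)|).card with hB
    have H' : ((L : ℝ)) * (B : ℝ) < 2 ^ (Fintype.card ι) := by simpa using H
    obtain ⟨f, hf⟩ := ih (by
      refine lt_of_le_of_lt ?_ H'
      have : ((L - 1 : ℕ) : ℝ) ≤ (L : ℝ) := by exact_mod_cast Nat.sub_le L 1
      exact mul_le_mul_of_nonneg_right this (Nat.cast_nonneg _))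
    -- find a good new vector
    have hexists : ∃ y : ι → Bool, ∀ l : Fin L, ¬ c < |∑ i, sgnb (f l i == y i)| := by
      by_contra hcon
      push_neg at hcon
      have hsubset : (univ : Finset (ι → Bool)) ⊆
          univ.biUnion fun l : Fin L =>
            univ.filter fun y : ι → Bool => c < |∑ i, sgnb (f l i == y i)| := by
        intro y _
        obtain ⟨l, hl⟩ := hcon y
        exact Finset.mem_biUnion.2 ⟨l, mem_univ _, mem_filter.2 ⟨mem_univ _, hl⟩⟩
      have hcard := (Finset.card_le_card hsubset).trans (Finset.card_biUnion_le)
      have hcard' : (2 : ℕ) ^ (Fintype.card ι) ≤ L * B := by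
        calc (2 : ℕ) ^ (Fintype.card ι) = (univ : Finset (ι → Bool)).card := by
              rw [Finset.card_univ, Fintype.card_fun]; simp
          _ ≤ ∑ l : Fin L, (univ.filter fun y : ι → Bool =>
                c < |∑ i, sgnb (f l i == y i)|).card := hcard
          _ = ∑ _l : Fin L, B := by exact Finset.sum_congr rfl fun l _ => hbad (f l)
          _ = L * B := by simp [mul_comm]
      have : ((2 : ℝ)) ^ (Fintype.card ι) ≤ (L : ℝ) * (B : ℝ) := by exact_mod_cast hcard'
      linarith
    obtain ⟨y, hy⟩ := hexists
    refine ⟨Fin.snoc f y, fun l l' hne => ?_⟩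
    have hcomm : ∀ a b : Bool, (a == b) = (b == a) := by decide
    have goodnew : ∀ j : Fin L, |∑ i, sgnb (f j i == y i)| ≤ c := fun j => not_lt.1 (hy j)
    have goodnew' : ∀ j : Fin L, |∑ i, sgnb (y i == f j i)| ≤ c := by
      intro j
      have heq : (∑ i, sgnb (y i == f j i)) = ∑ i, sgnb (f j i == y i) :=
        Finset.sum_congr rfl fun i _ => by rw [hcomm]
      rw [heq]; exact goodnew j
    rcases Fin.eq_castSucc_or_eq_last l with ⟨j, rfl⟩ | rfl <;>
      rcases Fin.eq_castSucc_or_eq_last l' with ⟨j', rfl⟩ | rfl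
    · have hjj : j ≠ j' := fun h => hne (by rw [h])
      simpa [Fin.snoc_castSucc] using hf j j' hjj
    · simpa [Fin.snoc_castSucc, Fin.snoc_last] using goodnew j
    · simpa [Fin.snoc_castSucc, Fin.snoc_last] using goodnew' j'
    · exact absurd rfl hne

lemma count_hyp (m p : ℕ) (hm : 0 < m) (hp : 0 < p)
    (α t c₁ : ℝ) (hα : 0 < α) (ht : 0 < t)
    (hc₁ : 0 < c₁) (hc₁' : c₁ < (1 / (2 * Real.log 2)) * (t / (2 * α ^ 2 * m * p)) ^ 2) :
    ((⌈(2 : ℝ) ^ (c₁ * m * p - 1 / 2)⌉₊ - 1 : ℕ) : ℝ) *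
      ((univ.filter fun z : Fin m × Fin p → Bool => t / α ^ 2 < |∑ i, sgnb (z i)|).card : ℝ)
        < 2 ^ (Fintype.card (Fin m × Fin p)) := by
  classical
  haveI : Nonempty (Fin m × Fin p) := ⟨⟨⟨0, hm⟩, ⟨0, hp⟩⟩⟩
  have hcard : Fintype.card (Fin m × Fin p) = m * p := by simp
  have hα2 : (0 : ℝ) < α ^ 2 := by positivity
  have hτ : 0 < t / α ^ 2 := div_pos ht hα2
  have hN : 0 < (m : ℝ) * (p : ℝ) := by
    have hm' : (0:ℝ) < m := by exact_mod_cast hm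
    have hp' : (0:ℝ) < p := by exact_mod_cast hp
    positivity
  have hlog2 : 0 < Real.log 2 := Real.log_pos (by norm_num)
  have h2pow : (0:ℝ) < 2 ^ (Fintype.card (Fin m × Fin p)) := pow_pos two_pos _
  rcases le_or_gt (⌈(2 : ℝ) ^ (c₁ * m * p - 1 / 2)⌉₊) 1 with hL1 | hL1
  · have h0 : (⌈(2 : ℝ) ^ (c₁ * m * p - 1 / 2)⌉₊ - 1 : ℕ) = 0 := by omega
    rw [h0, Nat.cast_zero, zero_mul]
    exact h2pow
  · set τ : ℝ := t / α ^ 2 with hτdef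
    set N : ℝ := (m : ℝ) * (p : ℝ) with hN_def
    set x : ℝ := (2 : ℝ) ^ (c₁ * m * p - 1 / 2 : ℝ) with hx
    have hx0 : 0 < x := Real.rpow_pos_of_pos (by norm_num) _
    have hx1 : (1 : ℝ) < x := by
      have := Nat.lt_ceil.1 hL1
      exact_mod_cast this
    have hexp_pos : 0 < c₁ * m * p - 1 / 2 := by
      rcases (Real.one_lt_rpow_iff_of_pos (by norm_num)).1 hx1 with ⟨_, h⟩ | ⟨h, _⟩
      · exact h
      · norm_num at h
    have hc₁N : c₁ * N > 1 / 2 := by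
      have h : c₁ * (m : ℝ) * (p : ℝ) = c₁ * N := by rw [hN_def]; ring
      nlinarith [hexp_pos]
    set β : ℝ := τ ^ 2 / (2 * N) with hβ
    have hβpos : 0 < β := by positivity
    have hkey : c₁ * N * Real.log 2 < β / 4 := by
      have hrw : t / (2 * α ^ 2 * m * p) = τ / (2 * N) := by
        rw [hτdef, hN_def]
        rw [div_div, div_eq_div_iff (by positivity) (by positivity)]
        ring
      rw [hrw] at hc₁'
      have h1 : c₁ * (2 * Real.log 2) < (τ / (2 * N)) ^ 2 := by
        have h2 : (1 / (2 * Real.log 2)) * (τ / (2 * N)) ^ 2 * (2 * Real.log 2)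
            = (τ / (2 * N)) ^ 2 := by field_simp
        nlinarith [hc₁', hlog2]
      have h3 : (τ / (2 * N)) ^ 2 = τ ^ 2 / (4 * N ^ 2) := by
        rw [div_pow]; congr 1; ring
      rw [h3] at h1
      have h4 : β / 4 = τ ^ 2 / (8 * N) := by rw [hβ]; ring
      rw [h4]
      have h5 : τ ^ 2 / (4 * N ^ 2) * (N / 2) = τ ^ 2 / (8 * N) := by
        field_simp; ring
      calc c₁ * N * Real.log 2 = c₁ * (2 * Real.log 2) * (N / 2) := by ring
        _ < τ ^ 2 / (4 * N ^ 2) * (N / 2) := mul_lt_mul_of_pos_right h1 (by positivity)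
        _ = τ ^ 2 / (8 * N) := h5
    have hβ2 : 2 * Real.log 2 < β := by nlinarith [hkey, hc₁N, hlog2]
    have h2x : 2 * x < Real.exp β := by
      have hxe : x = Real.exp ((c₁ * m * p - 1 / 2) * Real.log 2) := by
        rw [hx, Real.rpow_def_of_pos (by norm_num)]; ring_nf
      have h2e : (2 : ℝ) = Real.exp (Real.log 2) := (Real.exp_log (by norm_num)).symm
      have hprod : 2 * x = Real.exp (Real.log 2 + (c₁ * m * p - 1 / 2) * Real.log 2) := by
        rw [Real.exp_add, ← h2e, ← hxe]
      rw [hprod]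
      apply Real.exp_lt_exp.2
      have hNrw : c₁ * (m : ℝ) * (p : ℝ) = c₁ * N := by rw [hN_def]; ring
      have e1 : Real.log 2 + (c₁ * m * p - 1 / 2) * Real.log 2
          = c₁ * N * Real.log 2 + Real.log 2 / 2 := by rw [← hNrw]; ring
      rw [e1]
      linarith [hkey, hβ2, hβpos]
    have hLle : ((⌈x⌉₊ - 1 : ℕ) : ℝ) ≤ x := by
      have h1 : ((⌈x⌉₊ : ℕ) : ℝ) < x + 1 := Nat.ceil_lt_add_one hx0.le
      have h1L : 1 ≤ ⌈x⌉₊ := by omega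
      have h2 : ((⌈x⌉₊ - 1 : ℕ) : ℝ) = ((⌈x⌉₊ : ℕ) : ℝ) - 1 := by
        push_cast [Nat.cast_sub h1L]; ring
      rw [h2]; linarith
    have hBle : (((univ.filter fun z : Fin m × Fin p → Bool =>
        τ < |∑ i, sgnb (z i)|).card : ℕ) : ℝ)
        ≤ 2 * (2 ^ (Fintype.card (Fin m × Fin p)) * Real.exp (-β)) := by
      have h := two_sided (ι := Fin m × Fin p) τ hτ
      have hβrw : -τ ^ 2 / (2 * (Fintype.card (Fin m × Fin p) : ℝ)) = -β := by
        rw [hβ, hcard]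
        push_cast
        rw [hN_def]
        ring
      rw [hβrw] at h
      exact h
    calc ((⌈x⌉₊ - 1 : ℕ) : ℝ) * (((univ.filter fun z : Fin m × Fin p → Bool =>
          τ < |∑ i, sgnb (z i)|).card : ℕ) : ℝ)
        ≤ x * (2 * (2 ^ (Fintype.card (Fin m × Fin p)) * Real.exp (-β))) :=
          mul_le_mul hLle hBle (Nat.cast_nonneg _) hx0.le
      _ = (2 * x * Real.exp (-β)) * 2 ^ (Fintype.card (Fin m × Fin p)) := by ring
      _ < 1 * 2 ^ (Fintype.card (Fin m × Fin p)) := by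
          refine mul_lt_mul_of_pos_right ?_ h2pow
          rw [Real.exp_neg, mul_inv_lt_iff₀' (Real.exp_pos _)]
          simpa using h2x
      _ = 2 ^ (Fintype.card (Fin m × Fin p)) := one_mul _

/-- Existence of `L = ⌈2^{c₁ m p − 1/2}⌉` sign matrices with entries `±α` whose
pairwise Hadamard products have total sum at most `t` in absolute value. -/
theorem exists_sign_matrices (m p : ℕ) (hm : 0 < m) (hp : 0 < p)
    (α t c₁ : ℝ) (hα : 0 < α) (ht : 0 < t)
    (hc₁ : 0 < c₁) (hc₁' : c₁ < (1 / (2 * Real.log 2)) * (t / (2 * α ^ 2 * m * p)) ^ 2) :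
    ∃ A : Fin (⌈(2 : ℝ) ^ (c₁ * m * p - 1 / 2)⌉₊) → Matrix (Fin m) (Fin p) ℝ,
      (∀ l i j, A l i j = α ∨ A l i j = -α) ∧
      ∀ l l', l ≠ l' → |∑ i, ∑ j, (A l i j * A l' i j)| ≤ t := by
  classical
  have hα2 : (0 : ℝ) < α ^ 2 := by positivity
  obtain ⟨f, hf⟩ := greedy (ι := Fin m × Fin p) (t / α ^ 2)
    ⌈(2 : ℝ) ^ (c₁ * m * p - 1 / 2)⌉₊
    (count_hyp m p hm hp α t c₁ hα ht hc₁ hc₁')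
  refine ⟨fun l => fun i j => if f l (i, j) then α else -α, fun l i j => ?_, fun l l' hne => ?_⟩
  · dsimp only; split <;> simp
  · have hgood := hf l l' hne
    have hsum : ∑ i, ∑ j, ((if f l (i, j) then α else -α) * (if f l' (i, j) then α else -α))
        = α ^ 2 * ∑ i : Fin m × Fin p, sgnb (f l i == f l' i) := by
      rw [mul_sum, Fintype.sum_prod_type]
      refine Finset.sum_congr rfl fun i _ => Finset.sum_congr rfl fun j _ => ?_
      cases h1 : f l (i, j) <;> cases h2 : f l' (i, j) <;> simp [sgnb, h1, h2] <;> ring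
    rw [hsum, abs_mul, abs_of_nonneg hα2.le]
    calc α ^ 2 * |∑ i : Fin m × Fin p, sgnb (f l i == f l' i)| ≤ α ^ 2 * (t / α ^ 2) :=
          mul_le_mul_of_nonneg_left hgood hα2.le
      _ = t := by rw [mul_div_cancel₀ _ (ne_of_gt hα2)]
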